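/- arXiv:math/0303008 — 2 statements merged into one kernel-verified Lean document; each statement's English description precedes it below -/
import Mathlib

section
/- Let X be a normed linear space, J : X → ℝ ∪ {+∞} a lower semicontinuous functional, I : X → ℝ a functional of class C¹, and f = J + I. Then for every (u,η) ∈ epi(f) one has |dG_f|(u,η) = 1 if and only if |dG_J|(u, η − I(u)) = 1. -/
open Metric Set Filter
open scoped ENNReal

/-- The epigraph of `f : X → ℝ ∪ {+∞}`, as a subset of `X × ℝ`. -/
def epiSet {X : Type*} [MetricSpace X] (f : X → EReal) : Set (X × ℝ) :=
  {p | f p.1 ≤ (p.2 : EReal)}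

/-- The metric on `X × ℝ`, `d((u,η),(v,μ)) = (d(u,v)² + (η−μ)²)^{1/2}`. -/
noncomputable def distE {X : Type*} [MetricSpace X] (p q : X × ℝ) : ℝ :=
  Real.sqrt (dist p.1 q.1 ^ 2 + (p.2 - q.2) ^ 2)

/-- The open ball in `X × ℝ` with respect to `distE`. -/
def ballE {X : Type*} [MetricSpace X] (p : X × ℝ) (δ : ℝ) : Set (X × ℝ) :=
  {q | distE q p < δ}

/-- The set of admissible `σ` in the definition of the weak slope `|d G_f|(u, η)`. -/
def slopeSet {X : Type*} [MetricSpace X] (f : X → EReal) (u : X) (η : ℝ) : Set ℝ :=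
  {σ | 0 ≤ σ ∧ ∃ δ : ℝ, 0 < δ ∧ ∃ H : X × ℝ → ℝ → X × ℝ,
    ContinuousOn (fun q : (X × ℝ) × ℝ => H q.1 q.2)
      ((ballE (u, η) δ ∩ epiSet f) ×ˢ Icc 0 δ) ∧
    ∀ p ∈ ballE (u, η) δ ∩ epiSet f, ∀ t ∈ Icc (0:ℝ) δ,
      H p t ∈ epiSet f ∧ distE (H p t) p ≤ t ∧ (H p t).2 ≤ p.2 - σ * t}

/-- The weak slope `|d G_f|(u, η)` of `G_f` at `(u, η) ∈ epi f`. -/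
noncomputable def slopeG {X : Type*} [MetricSpace X] (f : X → EReal) (u : X) (η : ℝ) : ℝ :=
  sSup (slopeSet f u η)

/-- The weak slope `|df|(u)` of a lower semicontinuous `f` at `u ∈ dom f`. -/
noncomputable def wslope {X : Type*} [MetricSpace X] (f : X → EReal) (u : X) : ℝ≥0∞ :=
  if slopeG f u (f u).toReal < 1 then
    ENNReal.ofReal (slopeG f u (f u).toReal / Real.sqrt (1 - slopeG f u (f u).toReal ^ 2))
  else ⊤

/-- Admissible `σ` in the definition of the equivariant weak slope `|d_{ℤ₂} G_f|(0, η)`. -/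
def slopeZ2Set {X : Type*} [NormedAddCommGroup X] [NormedSpace ℝ X]
    (f : X → EReal) (η : ℝ) : Set ℝ :=
  {σ | 0 ≤ σ ∧ ∃ δ : ℝ, 0 < δ ∧ ∃ H : X × ℝ → ℝ → X × ℝ,
    ContinuousOn (fun q : (X × ℝ) × ℝ => H q.1 q.2)
      ((ballE ((0 : X), η) δ ∩ epiSet f) ×ˢ Icc 0 δ) ∧
    ∀ p ∈ ballE ((0 : X), η) δ ∩ epiSet f, ∀ t ∈ Icc (0:ℝ) δ,
      H p t ∈ epiSet f ∧ distE (H p t) p ≤ t ∧ (H p t).2 ≤ p.2 - σ * t ∧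
      (H (-p.1, p.2) t).1 = -(H p t).1}

/-- The equivariant weak slope `|d_{ℤ₂} G_f|(0, η)`. -/
noncomputable def slopeZ2 {X : Type*} [NormedAddCommGroup X] [NormedSpace ℝ X]
    (f : X → EReal) (η : ℝ) : ℝ :=
  sSup (slopeZ2Set f η)

/-- Condition (3.3). -/
def cond33 {X : Type*} [MetricSpace X] (f : X → EReal) : Prop :=
  ∀ (u : X) (η : ℝ), (u, η) ∈ epiSet f → f u < (η : EReal) → slopeG f u η = 1

/-- The Palais–Smale condition at level `c`. -/
def PScond {X : Type*} [MetricSpace X] (f : X → EReal) (c : ℝ) : Prop :=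
  ∀ u : ℕ → X, (∀ n, f (u n) ≠ ⊤) →
    Tendsto (fun n => wslope f (u n)) atTop (nhds 0) →
    Tendsto (fun n => f (u n)) atTop (nhds (c : EReal)) →
    ∃ (v : X) (φ : ℕ → ℕ), StrictMono φ ∧ Tendsto (fun n => u (φ n)) atTop (nhds v)

section helpers
variable {X : Type*} [MetricSpace X]

lemma ereal_add_le (a : EReal) (ha : a ≠ ⊥) (r m : ℝ) :
    a + r ≤ (m:EReal) ↔ a ≤ ((m - r:ℝ):EReal) := by
  induction a using EReal.rec with
  | bot => simp at ha
  | coe x =>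
    rw [← EReal.coe_add, EReal.coe_le_coe_iff, EReal.coe_le_coe_iff]
    constructor <;> intro <;> linarith
  | top =>
    simp only [EReal.top_add_coe, top_le_iff]
    constructor <;> intro h
    · exact absurd h (EReal.coe_ne_top _)
    · exact absurd h (EReal.coe_ne_top _)

lemma ereal_add_cancel (a : EReal) (ha : a ≠ ⊥) (r : ℝ) : a + r + ((-r:ℝ):EReal) = a := by
  induction a using EReal.rec with
  | bot => simp at ha
  | coe x => norm_cast; ring
  | top => simp [EReal.top_add_coe]

lemma ereal_add_ne_bot (a : EReal) (ha : a ≠ ⊥) (r : ℝ) : a + r ≠ ⊥ := by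
  induction a using EReal.rec with
  | bot => simp at ha
  | coe x => exact (EReal.coe_add x r) ▸ EReal.coe_ne_bot _
  | top => simp [EReal.top_add_coe]

lemma distE_self (p : X × ℝ) : distE p p = 0 := by simp [distE]

lemma distE_fst_le (p q : X × ℝ) : dist p.1 q.1 ≤ distE p q := by
  rw [show dist p.1 q.1 = Real.sqrt (dist p.1 q.1 ^ 2) from
    (Real.sqrt_sq dist_nonneg).symm]
  exact Real.sqrt_le_sqrt (by nlinarith [sq_nonneg (p.2 - q.2)])

lemma distE_snd_le (p q : X × ℝ) : |p.2 - q.2| ≤ distE p q := by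
  rw [← Real.sqrt_sq_eq_abs]
  exact Real.sqrt_le_sqrt (by nlinarith [sq_nonneg (dist p.1 q.1)])

lemma distE_le (p q : X × ℝ) : distE p q ≤ dist p.1 q.1 + |p.2 - q.2| := by
  rw [show dist p.1 q.1 + |p.2 - q.2| = Real.sqrt ((dist p.1 q.1 + |p.2 - q.2|)^2) from
    (Real.sqrt_sq (by positivity)).symm]
  apply Real.sqrt_le_sqrt
  have : (p.2 - q.2)^2 = |p.2 - q.2|^2 := (sq_abs _).symm
  nlinarith [abs_nonneg (p.2 - q.2), dist_nonneg (x := p.1) (y := q.1)]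

lemma distE_sq_le {p q : X × ℝ} {s : ℝ} (h : distE p q ≤ s) :
    dist p.1 q.1 ^ 2 + (p.2 - q.2) ^ 2 ≤ s ^ 2 := by
  have h0 : (0:ℝ) ≤ dist p.1 q.1 ^ 2 + (p.2 - q.2) ^ 2 := by positivity
  have h1 := Real.sq_sqrt h0
  have h2 := Real.sqrt_nonneg (dist p.1 q.1 ^ 2 + (p.2 - q.2) ^ 2)
  simp only [distE] at h
  nlinarith

lemma epi_corr (J : X → EReal) (hbot : ∀ x, J x ≠ ⊥) (I : X → ℝ) (f : X → EReal)
    (hf : ∀ x, f x = J x + (I x : EReal)) (v : X) (μ : ℝ) :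
    (v, μ) ∈ epiSet f ↔ (v, μ - I v) ∈ epiSet J := by
  simp only [epiSet, mem_setOf_eq]
  rw [hf v]
  exact ereal_add_le (J v) (hbot v) (I v) μ

lemma zero_mem_slopeSet (f : X → EReal) (u : X) (η : ℝ) : 0 ∈ slopeSet f u η := by
  refine ⟨le_refl 0, 1, one_pos, fun p _ => p, continuousOn_fst, ?_⟩
  intro p hp t ht
  exact ⟨hp.2, by rw [distE_self]; exact ht.1, by simp⟩

lemma slopeSet_le_one (f : X → EReal) (u : X) (η : ℝ) (huη : (u, η) ∈ epiSet f)
    {σ : ℝ} (hσ : σ ∈ slopeSet f u η) : σ ≤ 1 := by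
  obtain ⟨hσ0, δ, hδ, H, hcont, hprop⟩ := hσ
  have h0 : (u, η) ∈ ballE (u, η) δ ∩ epiSet f :=
    ⟨by simp [ballE, distE_self, hδ], huη⟩
  obtain ⟨_, hd, hdrop⟩ := hprop (u, η) h0 δ ⟨hδ.le, le_refl δ⟩
  have hsnd : |(H (u, η) δ).2 - η| ≤ δ := (distE_snd_le (H (u, η) δ) (u, η)).trans hd
  rw [abs_le] at hsnd
  nlinarith [hsnd.1]


lemma push {X : Type*} [NormedAddCommGroup X] [NormedSpace ℝ X]
    (J : X → EReal) (hbot : ∀ x, J x ≠ ⊥) (I : X → ℝ) (hIc : Continuous I)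
    (f : X → EReal) (hf : ∀ x, f x = J x + (I x : EReal))
    (u : X) (η : ℝ) (K : ℝ) (hK0 : 0 ≤ K) (r₀ : ℝ) (hr₀ : 0 < r₀)
    (hlip : ∀ x ∈ ball u r₀, ∀ y ∈ ball u r₀, |I x - I y| ≤ K * dist x y)
    (σ : ℝ) (hσ : σ ∈ slopeSet J u (η - I u)) (hσ1 : σ ≤ 1)
    (hpos : 0 ≤ (σ - K * Real.sqrt (1 - σ^2)) / (1 + (1+K) * Real.sqrt (1 - σ^2))) :
    (σ - K * Real.sqrt (1 - σ^2)) / (1 + (1+K) * Real.sqrt (1 - σ^2)) ∈ slopeSet f u η := by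
  obtain ⟨hσ0, δ, hδ, H, hcont, hprop⟩ := hσ
  obtain ⟨τ, hτdef⟩ : ∃ τ, τ = Real.sqrt (1 - σ^2) := ⟨_, rfl⟩
  rw [← hτdef] at hpos ⊢
  have hτ0 : 0 ≤ τ := hτdef ▸ Real.sqrt_nonneg _
  have hτsq : τ^2 = 1 - σ^2 := hτdef ▸ Real.sq_sqrt (by nlinarith)
  have hτ1 : τ ≤ 1 := by nlinarith [sq_nonneg (τ - 1), sq_nonneg σ]
  obtain ⟨C, hCdef⟩ : ∃ C, C = 1 + (1+K) * τ := ⟨_, rfl⟩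
  rw [← hCdef] at hpos ⊢
  have hC1 : 1 ≤ C := by nlinarith
  have hCpos : 0 < C := by linarith
  obtain ⟨σ', hσ'def⟩ : ∃ σ', σ' = (σ - K * τ) / C := ⟨_, rfl⟩
  rw [← hσ'def] at hpos ⊢
  obtain ⟨δ', hδ'def⟩ : ∃ δ', δ' = min (r₀/3) (δ/(2+K)) := ⟨_, rfl⟩
  have hδ'pos : 0 < δ' := hδ'def ▸ lt_min (by linarith) (by positivity)
  have hδ'r : δ' ≤ r₀/3 := hδ'def ▸ min_le_left _ _
  have hδ'δK : (2+K) * δ' ≤ δ := by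
    have h1 : δ' ≤ δ/(2+K) := hδ'def ▸ min_le_right _ _
    have h2 : (0:ℝ) < 2+K := by linarith
    calc (2+K) * δ' ≤ (2+K) * (δ/(2+K)) := by nlinarith
    _ = δ := by field_simp
  have hδ'δ : δ' ≤ δ := by nlinarith [hδ'pos]
  -- membership transfer
  have hmem : ∀ p ∈ ballE (u, η) δ' ∩ epiSet f,
      ((p.1, p.2 - I p.1) : X × ℝ) ∈ ballE (u, η - I u) δ ∩ epiSet J := by
    rintro p ⟨hpb, hpe⟩
    have hD : distE p (u, η) < δ' := hpb
    have hd1 : dist p.1 u < δ' := lt_of_le_of_lt (distE_fst_le p (u, η)) hD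
    have hd2 : |p.2 - η| < δ' := lt_of_le_of_lt (distE_snd_le p (u, η)) hD
    have hp1ball : p.1 ∈ ball u r₀ := by
      rw [mem_ball]; exact lt_of_lt_of_le hd1 (by linarith)
    have huball : u ∈ ball u r₀ := mem_ball_self hr₀
    have hIlip : |I p.1 - I u| ≤ K * dist p.1 u := hlip p.1 hp1ball u huball
    constructor
    · show distE (p.1, p.2 - I p.1) (u, η - I u) < δ
      have habs : |(p.2 - I p.1) - (η - I u)| ≤ |p.2 - η| + |I p.1 - I u| := by
        have h1 : (p.2 - I p.1) - (η - I u) = (p.2 - η) + (I u - I p.1) := by ring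
        rw [h1]
        exact (abs_add_le _ _).trans (by rw [abs_sub_comm (I u)])
      have hKd : K * dist p.1 u ≤ K * δ' := mul_le_mul_of_nonneg_left hd1.le hK0
      calc distE (p.1, p.2 - I p.1) (u, η - I u)
          ≤ dist p.1 u + |(p.2 - I p.1) - (η - I u)| := distE_le _ _
        _ < (2+K) * δ' := by nlinarith [hIlip.trans hKd]
        _ ≤ δ := hδ'δK
    · exact (epi_corr J hbot I f hf p.1 p.2).mp hpe
  refine ⟨hpos, δ', hδ'pos, fun p t => ((H (p.1, p.2 - I p.1) (t / C)).1,
      (H (p.1, p.2 - I p.1) (t / C)).2 + I (H (p.1, p.2 - I p.1) (t / C)).1), ?_, ?_⟩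
  · -- continuity
    have hg : Continuous (fun q : (X × ℝ) × ℝ =>
        (((q.1.1, q.1.2 - I q.1.1) : X × ℝ), q.2 / C)) := by fun_prop
    have hmaps : MapsTo (fun q : (X × ℝ) × ℝ => (((q.1.1, q.1.2 - I q.1.1) : X × ℝ), q.2 / C))
        ((ballE (u, η) δ' ∩ epiSet f) ×ˢ Icc 0 δ')
        ((ballE (u, η - I u) δ ∩ epiSet J) ×ˢ Icc 0 δ) := by
      rintro ⟨p, t⟩ ⟨hp, ht⟩
      exact mk_mem_prod (hmem p hp)
        ⟨div_nonneg ht.1 hCpos.le, (div_le_self ht.1 hC1).trans (ht.2.trans hδ'δ)⟩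
    have h1 : ContinuousOn ((fun r : (X × ℝ) × ℝ => H r.1 r.2) ∘
        (fun q : (X × ℝ) × ℝ => (((q.1.1, q.1.2 - I q.1.1) : X × ℝ), q.2 / C)))
        ((ballE (u, η) δ' ∩ epiSet f) ×ˢ Icc 0 δ') :=
      hcont.comp hg.continuousOn hmaps
    have hΦ : Continuous (fun r : X × ℝ => ((r.1, r.2 + I r.1) : X × ℝ)) := by fun_prop
    exact hΦ.comp_continuousOn h1
  · rintro p hp t ht
    have hsmem : t / C ∈ Icc (0:ℝ) δ := by
      refine ⟨div_nonneg ht.1 hCpos.le, ?_⟩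
      calc t / C ≤ t := div_le_self ht.1 hC1
        _ ≤ δ' := ht.2
        _ ≤ δ := hδ'δ
    obtain ⟨hq_epi, hq_dist, hq_drop⟩ := hprop (p.1, p.2 - I p.1) (hmem p hp) (t / C) hsmem
    obtain ⟨s, hsdef⟩ : ∃ s, s = t / C := ⟨_, rfl⟩
    obtain ⟨q, hqdef⟩ : ∃ q, q = H (p.1, p.2 - I p.1) (t / C) := ⟨_, rfl⟩
    rw [← hqdef] at hq_epi hq_dist hq_drop
    rw [← hsdef] at hq_dist hq_drop
    have hs0 : 0 ≤ s := hsdef ▸ div_nonneg ht.1 hCpos.le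
    have hst : C * s = t := by rw [hsdef]; field_simp
    have hsδ' : s ≤ δ' := hsdef ▸ le_trans (div_le_self ht.1 hC1) ht.2
    obtain ⟨a, hadef⟩ : ∃ a, a = dist q.1 p.1 := ⟨_, rfl⟩
    have ha0 : 0 ≤ a := hadef ▸ dist_nonneg
    have hsq : a^2 + (q.2 - (p.2 - I p.1))^2 ≤ s^2 := by
      rw [hadef]; exact distE_sq_le hq_dist
    have hb : |q.2 - (p.2 - I p.1)| ≤ s := (distE_snd_le q (p.1, p.2 - I p.1)).trans hq_dist
    have hdrop : q.2 ≤ (p.2 - I p.1) - σ * s := hq_drop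
    -- refined horizontal bound
    have h5 : σ*s ≤ -(q.2 - (p.2 - I p.1)) := by linarith
    have hb2 : (σ*s)^2 ≤ (q.2 - (p.2 - I p.1))^2 := by
      calc (σ*s)^2 ≤ (-(q.2 - (p.2 - I p.1)))^2 := pow_le_pow_left₀ (mul_nonneg hσ0 hs0) h5 2
      _ = (q.2 - (p.2 - I p.1))^2 := by ring
    have hτs0 : 0 ≤ τ * s := mul_nonneg hτ0 hs0
    have ha2' : a^2 ≤ (τ*s)^2 := by
      have e1 : (τ*s)^2 = s^2 - (σ*s)^2 := by rw [mul_pow, hτsq]; ring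
      linarith
    have ha2 : a ≤ τ * s := by
      have h := Real.sqrt_le_sqrt ha2'
      rwa [Real.sqrt_sq ha0, Real.sqrt_sq hτs0] at h
    have has : a ≤ s := ha2.trans (mul_le_of_le_one_left hs0 hτ1)
    -- Lipschitz bound
    have hd1 : dist p.1 u < δ' := lt_of_le_of_lt (distE_fst_le p (u, η)) hp.1
    have hp1ball : p.1 ∈ ball u r₀ := by rw [mem_ball]; linarith
    have hwball : q.1 ∈ ball u r₀ := by
      rw [mem_ball]
      calc dist q.1 u ≤ dist q.1 p.1 + dist p.1 u := dist_triangle _ _ _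
        _ < δ' + δ' := add_lt_add_of_le_of_lt (hadef ▸ has.trans hsδ') hd1
        _ ≤ r₀ := by linarith
    have hIlip : |I q.1 - I p.1| ≤ K * a := hadef ▸ hlip q.1 hwball p.1 hp1ball
    have hKa : K * a ≤ K * (τ * s) := mul_le_mul_of_nonneg_left ha2 hK0
    beta_reduce
    rw [← hqdef]
    refine ⟨?_, ?_, ?_⟩
    · have h2 : (q.1, q.2 + I q.1 - I q.1) ∈ epiSet J := by
        rw [show q.2 + I q.1 - I q.1 = q.2 by ring]; exact hq_epi
      exact (epi_corr J hbot I f hf q.1 (q.2 + I q.1)).mpr h2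
    · show distE (q.1, q.2 + I q.1) p ≤ t
      have habs : |(q.2 + I q.1) - p.2| ≤ |q.2 - (p.2 - I p.1)| + |I q.1 - I p.1| := by
        have h1 : (q.2 + I q.1) - p.2 = (q.2 - (p.2 - I p.1)) + (I q.1 - I p.1) := by ring
        rw [h1]; exact abs_add_le _ _
      have hIK : |I q.1 - I p.1| ≤ K * (τ * s) := hIlip.trans hKa
      calc distE (q.1, q.2 + I q.1) p ≤ dist q.1 p.1 + |(q.2 + I q.1) - p.2| := distE_le _ _
        _ ≤ τ * s + (s + K * (τ * s)) := by rw [← hadef]; linarith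
        _ = C * s := by rw [hCdef]; ring
        _ = t := hst
    · show q.2 + I q.1 ≤ p.2 - σ' * t
      have h1 : I q.1 - I p.1 ≤ K * a := le_trans (le_abs_self _) hIlip
      have h3 : σ' * t = (σ - K * τ) * s := by
        rw [hσ'def, ← hst]; field_simp
      have h4 : (σ - K*τ)*s = σ*s - K*(τ*s) := by ring
      linarith

lemma key {X : Type*} [NormedAddCommGroup X] [NormedSpace ℝ X]
    (J : X → EReal) (hbot : ∀ x, J x ≠ ⊥) (I : X → ℝ) (hI : ContDiff ℝ 1 I)
    (f : X → EReal) (hf : ∀ x, f x = J x + (I x : EReal))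
    (u : X) (η : ℝ) (huη : (u, η) ∈ epiSet f)
    (h : slopeG J u (η - I u) = 1) : slopeG f u η = 1 := by
  have huJ : (u, η - I u) ∈ epiSet J := (epi_corr J hbot I f hf u η).mp huη
  obtain ⟨K₀, tset, htset, hK⟩ := (hI.contDiffAt (x := u)).exists_lipschitzOnWith
  obtain ⟨r₀, hr₀, hball⟩ := Metric.mem_nhds_iff.mp htset
  set K : ℝ := (K₀ : ℝ) with hKdef
  have hK0 : 0 ≤ K := K₀.coe_nonneg
  have hlip : ∀ x ∈ ball u r₀, ∀ y ∈ ball u r₀, |I x - I y| ≤ K * dist x y := by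
    intro x hx y hy
    have := hK.dist_le_mul x (hball hx) y (hball hy)
    rwa [Real.dist_eq] at this
  refine IsLUB.csSup_eq ⟨?_, ?_⟩ ⟨0, zero_mem_slopeSet f u η⟩
  · exact fun σ hσ => slopeSet_le_one f u η huη hσ
  · intro b hb
    by_contra hlt
    push_neg at hlt
    have hb0 : 0 ≤ b := hb (zero_mem_slopeSet f u η)
    set gfun : ℝ → ℝ := fun σ =>
      (σ - K * Real.sqrt (1 - σ^2)) / (1 + (1+K) * Real.sqrt (1 - σ^2)) with hgdef
    have hsc : ContinuousAt (fun σ : ℝ => Real.sqrt (1 - σ^2)) 1 :=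
      Real.continuous_sqrt.continuousAt.comp (by fun_prop)
    have hgc : ContinuousAt gfun 1 := by
      apply ContinuousAt.div
      · exact continuousAt_id.sub (continuousAt_const.mul hsc)
      · exact continuousAt_const.add (continuousAt_const.mul hsc)
      · norm_num
    have hg1 : gfun 1 = 1 := by norm_num [hgdef]
    have hb1 : b < gfun 1 := by rw [hg1]; exact hlt
    have hev : ∀ᶠ σ in nhds 1, b < gfun σ := hgc.eventually_const_lt hb1
    obtain ⟨ε, hε, hball'⟩ := Metric.eventually_nhds_iff.mp hev
    have hne : (slopeSet J u (η - I u)).Nonempty := ⟨0, zero_mem_slopeSet J u (η - I u)⟩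
    have hmin : 0 < min ε 1 := lt_min hε one_pos
    obtain ⟨σ, hσmem, hσgt⟩ := exists_lt_of_lt_csSup hne
      (show 1 - min ε 1 < sSup (slopeSet J u (η - I u)) by
        rw [show sSup (slopeSet J u (η - I u)) = 1 from h]; linarith)
    have hσ1 : σ ≤ 1 := slopeSet_le_one J u (η - I u) huJ hσmem
    have hσd : dist σ 1 < ε := by
      rw [Real.dist_eq, abs_sub_comm, abs_of_nonneg (by linarith)]
      have : min ε 1 ≤ ε := min_le_left _ _
      linarith
    have hgfb : b < gfun σ := hball' hσd
    have hgf0 : 0 ≤ gfun σ := le_of_lt (lt_of_le_of_lt hb0 hgfb)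
    have hmain : gfun σ ∈ slopeSet f u η :=
      push J hbot I hI.continuous f hf u η K hK0 r₀ hr₀ hlip σ hσmem hσ1 hgf0
    exact absurd (hb hmain) (not_le.mpr hgfb)


end helpers

/-- **Proposition 3.7 (a).** For `f = J + I` with `J` lower semicontinuous and `I` of class
`C¹`, for every `(u,η) ∈ epi f` one has `|dG_f|(u,η) = 1 ↔ |dG_J|(u, η - I u) = 1`. -/
theorem statement1 {X : Type*} [NormedAddCommGroup X] [NormedSpace ℝ X]
    (J : X → EReal) (hJ : LowerSemicontinuous J) (hbot : ∀ x, J x ≠ ⊥)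
    (I : X → ℝ) (hI : ContDiff ℝ 1 I)
    (f : X → EReal) (hf : ∀ x, f x = J x + (I x : EReal))
    (u : X) (η : ℝ) (huη : (u, η) ∈ epiSet f) :
    slopeG f u η = 1 ↔ slopeG J u (η - I u) = 1 := by
  -- main proof
  constructor
  · intro h
    have hbot' : ∀ x, f x ≠ ⊥ := fun x => (hf x) ▸ ereal_add_ne_bot (J x) (hbot x) (I x)
    have hf' : ∀ x, J x = f x + ((-(I x) : ℝ) : EReal) := fun x => by
      rw [hf x]; exact (ereal_add_cancel (J x) (hbot x) (I x)).symm
    have huη' : (u, η - I u) ∈ epiSet J := (epi_corr J hbot I f hf u η).mp huη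
    have := key f hbot' (fun x => -(I x)) hI.neg J hf' u (η - I u) huη'
      (by rw [show η - I u - -(I u) = η by ring]; exact h)
    exact this
  · intro h
    exact key J hbot I hI f hf u η huη h
end

section
/- Let X be a Banach space, f : X → ℝ ∪ {+∞} an even lower semicontinuous function, and (0,η) ∈ epi(f) with f(0) < η. Assume that for every ϱ > 0 there exist δ > 0 and a continuous map H : {w ∈ B(0,δ) : f(w) < η + δ} × [0,δ] → X satisfying d(H(w,t), w) ≤ ϱt, f(H(w,t)) ≤ (1−t)f(w) + t(f(0) + ϱ), and H(−w,t) = −H(w,t) whenever w ∈ B(0,δ), f(w) < η + δ and t ∈ [0,δ]. Then |d_{ℤ₂}G_f|(0,η) = 1. -/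
open Metric Set Filter
open scoped Topology
open scoped ENNReal

lemma fst_le_distE {X : Type*} [MetricSpace X] (p q : X × ℝ) :
    dist p.1 q.1 ≤ distE p q := by
  rw [distE]
  calc dist p.1 q.1 = Real.sqrt (dist p.1 q.1 ^ 2) := (Real.sqrt_sq dist_nonneg).symm
  _ ≤ _ := Real.sqrt_le_sqrt (by nlinarith [sq_nonneg (p.2 - q.2)])

lemma snd_le_distE {X : Type*} [MetricSpace X] (p q : X × ℝ) :
    |p.2 - q.2| ≤ distE p q := by
  rw [distE]
  calc |p.2 - q.2| = Real.sqrt ((p.2 - q.2) ^ 2) := (Real.sqrt_sq_eq_abs _).symm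
  _ ≤ _ := Real.sqrt_le_sqrt (by nlinarith [sq_nonneg (dist p.1 q.1)])

set_option maxHeartbeats 1000000 in
lemma mem_slopeZ2Set {X : Type*} [NormedAddCommGroup X] [NormedSpace ℝ X]
    (f : X → EReal) (hbot : ∀ x, f x ≠ ⊥)
    (η : ℝ) (hmem : ((0 : X), η) ∈ epiSet f) (hlt : f 0 < (η : EReal))
    (hyp : ∀ ϱ : ℝ, 0 < ϱ → ∃ δ : ℝ, 0 < δ ∧ ∃ H : X → ℝ → X,
      ContinuousOn (fun q : X × ℝ => H q.1 q.2)
        ({w | w ∈ ball (0 : X) δ ∧ f w < ((η + δ : ℝ) : EReal)} ×ˢ Icc 0 δ) ∧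
      ∀ w, w ∈ ball (0 : X) δ → f w < ((η + δ : ℝ) : EReal) → ∀ t ∈ Icc (0:ℝ) δ,
        dist (H w t) w ≤ ϱ * t ∧
        f (H w t) ≤ ((1 - t : ℝ) : EReal) * f w + ((t : ℝ) : EReal) * (f 0 + (ϱ : EReal)) ∧
        H (-w) t = -(H w t))
    (σ : ℝ) (hσ0 : 0 ≤ σ) (hσ1 : σ < 1) : σ ∈ slopeZ2Set f η := by
  set a : ℝ := (f 0).toReal with ha_def
  have hftop : f 0 ≠ ⊤ := (hlt.trans (EReal.coe_lt_top η)).ne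
  have hfa : f 0 = (a : EReal) := (EReal.coe_toReal hftop (hbot 0)).symm
  have hab : a < η := by rwa [hfa, EReal.coe_lt_coe_iff] at hlt
  set b : ℝ := η - a with hb_def
  have hb : 0 < b := by simp [hb_def]; linarith
  -- choose ε > 0 with σ < (b - 2 ε) / sqrt (ε² + (b+ε)²)
  set F : ℝ → ℝ := fun ε => (b - 2 * ε) / Real.sqrt (ε ^ 2 + (b + ε) ^ 2) with hF_def
  have hF0 : F 0 = 1 := by
    simp only [hF_def]
    rw [show (0:ℝ)^2 + (b+0)^2 = b^2 by ring, Real.sqrt_sq hb.le]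
    field_simp
    ring
  have hFc : ContinuousAt F 0 := by
    apply ContinuousAt.div (by fun_prop)
    · exact (Real.continuous_sqrt.comp (by fun_prop)).continuousAt
    · rw [show (0:ℝ)^2 + (b+0)^2 = b^2 by ring, Real.sqrt_sq hb.le]
      exact hb.ne'
  have hev : ∀ᶠ ε in 𝓝 (0:ℝ), σ < F ε := by
    have : Tendsto F (𝓝 0) (𝓝 1) := by rw [ContinuousAt, hF0] at hFc; exact hFc
    exact this.eventually (eventually_gt_nhds hσ1)
  have hev' : ∀ᶠ ε in 𝓝[>] (0:ℝ), σ < F ε ∧ ε ∈ Ioi (0:ℝ) :=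
    (hev.filter_mono nhdsWithin_le_nhds).and self_mem_nhdsWithin
  obtain ⟨ε, hσF, hε0⟩ := hev'.exists
  rw [Set.mem_Ioi] at hε0
  obtain ⟨δ, hδ, H, hHc, hH⟩ := hyp ε hε0
  set L : ℝ := Real.sqrt (ε ^ 2 + (b + ε) ^ 2) with hL_def
  have hL : 0 < L := Real.sqrt_pos.2 (by positivity)
  have hσL : σ * L < b - 2 * ε := by
    rw [hF_def] at hσF
    have := (lt_div_iff₀ hL).1 hσF
    linarith
  have hb2 : 0 < b - 2 * ε := lt_of_le_of_lt (by positivity) hσL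
  set δ₂ : ℝ := min (min δ ε) (min L (L * δ)) with hδ₂_def
  have hδ₂ : 0 < δ₂ := by
    exact lt_min (lt_min hδ hε0) (lt_min hL (mul_pos hL hδ))
  have hδ₂δ : δ₂ ≤ δ := le_trans (min_le_left _ _) (min_le_left _ _)
  have hδ₂ε : δ₂ ≤ ε := le_trans (min_le_left _ _) (min_le_right _ _)
  have hδ₂L : δ₂ ≤ L := le_trans (min_le_right _ _) (min_le_left _ _)
  have hδ₂Lδ : δ₂ ≤ L * δ := le_trans (min_le_right _ _) (min_le_right _ _)
  clear hσF hev hev' hFc hF0 hF_def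
  clear_value a b L δ₂
  clear F
  refine ⟨hσ0, δ₂, hδ₂, fun p t => (H p.1 (t / L), p.2 - (t / L) * (p.2 - a - ε)), ?_, ?_⟩
  · -- continuity
    apply ContinuousOn.prodMk
    · have hmaps : MapsTo (fun q : (X × ℝ) × ℝ => (q.1.1, q.2 / L))
          ((ballE ((0:X), η) δ₂ ∩ epiSet f) ×ˢ Icc 0 δ₂)
          ({w | w ∈ ball (0 : X) δ ∧ f w < ((η + δ : ℝ) : EReal)} ×ˢ Icc 0 δ) := by
        rintro ⟨⟨w, μ⟩, t⟩ ⟨⟨hball, hepi⟩, ht0, htδ⟩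
        have h1 : dist w 0 < δ₂ := lt_of_le_of_lt (fst_le_distE (w, μ) ((0:X), η)) hball
        have h2 : |μ - η| < δ₂ := lt_of_le_of_lt (snd_le_distE (w, μ) ((0:X), η)) hball
        refine ⟨⟨mem_ball.2 (lt_of_lt_of_le h1 hδ₂δ), ?_⟩, ?_, ?_⟩
        · refine lt_of_le_of_lt hepi ?_
          rw [EReal.coe_lt_coe_iff]
          have := abs_lt.1 h2
          linarith
        · positivity
        · rw [div_le_iff₀ hL]
          calc t ≤ δ₂ := htδ
          _ ≤ L * δ := hδ₂Lδ
          _ = δ * L := by ring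
      exact hHc.comp (Continuous.continuousOn (by fun_prop)) hmaps
    · fun_prop
  · rintro ⟨w, μ⟩ ⟨hball, hepi⟩ t ⟨ht0, htδ⟩
    have h1 : dist w 0 < δ₂ := lt_of_le_of_lt (fst_le_distE (w, μ) ((0:X), η)) hball
    have h2 : |μ - η| < δ₂ := lt_of_le_of_lt (snd_le_distE (w, μ) ((0:X), η)) hball
    have h2' := abs_lt.1 h2
    have hwball : w ∈ ball (0 : X) δ := mem_ball.2 (lt_of_lt_of_le h1 hδ₂δ)
    have hwf : f w < ((η + δ : ℝ) : EReal) := by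
      refine lt_of_le_of_lt hepi ?_
      rw [EReal.coe_lt_coe_iff]; linarith
    set s : ℝ := t / L with hs_def
    have hs0 : 0 ≤ s := hs_def ▸ div_nonneg ht0 hL.le
    have hsδ : s ≤ δ := by
      rw [hs_def, div_le_iff₀ hL]
      calc t ≤ δ₂ := htδ
      _ ≤ L * δ := hδ₂Lδ
      _ = δ * L := by ring
    have hs1 : s ≤ 1 := by
      rw [hs_def, div_le_one hL]; exact htδ.trans hδ₂L
    have hsL : s * L = t := by rw [hs_def]; field_simp
    beta_reduce
    rw [← hs_def]
    clear_value s
    obtain ⟨hd, hfH, hsym⟩ := hH w hwball hwf s ⟨hs0, hsδ⟩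
    -- f w is finite
    have hfw_top : f w ≠ ⊤ := (lt_of_le_of_lt hepi (EReal.coe_lt_top μ)).ne
    set r : ℝ := (f w).toReal with hr_def
    have hfw : f w = (r : EReal) := (EReal.coe_toReal hfw_top (hbot w)).symm
    clear_value r
    have hepi' : f w ≤ (μ : EReal) := hepi
    have hrμ : r ≤ μ := by rwa [hfw, EReal.coe_le_coe_iff] at hepi'
    -- bounds on μ - a - ε
    have hμ1 : b - 2 * ε < μ - a - ε := by
      have : η - δ₂ < μ := by linarith
      have := hδ₂ε
      linarith [hb_def]
    have hμ2 : μ - a - ε ≤ b + ε := by linarith [hb_def, h2'.2, hδ₂ε]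
    have hμ0 : 0 ≤ μ - a - ε := le_of_lt (lt_of_le_of_lt (by positivity) hμ1)
    refine ⟨?_, ?_, ?_, ?_⟩
    · -- epigraph membership
      show f (H w s) ≤ ((μ - s * (μ - a - ε) : ℝ) : EReal)
      refine le_trans hfH ?_
      rw [hfw, hfa]
      rw [show ((a : EReal) + (ε : EReal)) = ((a + ε : ℝ) : EReal) by
        rw [EReal.coe_add]]
      rw [← EReal.coe_mul, ← EReal.coe_mul, ← EReal.coe_add, EReal.coe_le_coe_iff]
      nlinarith
    · -- distance estimate
      show distE (H w s, μ - s * (μ - a - ε)) (w, μ) ≤ t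
      rw [distE]
      have hkey : dist (H w s) w ^ 2 + ((μ - s * (μ - a - ε)) - μ) ^ 2 ≤ t ^ 2 := by
        have h3 : dist (H w s) w ≤ ε * s := hd
        have h4 : ((μ - s * (μ - a - ε)) - μ) ^ 2 = s ^ 2 * (μ - a - ε) ^ 2 := by ring
        have h5 : dist (H w s) w ^ 2 ≤ ε ^ 2 * s ^ 2 := by nlinarith [dist_nonneg (x := H w s) (y := w)]
        have h6 : s ^ 2 * (μ - a - ε) ^ 2 ≤ s ^ 2 * (b + ε) ^ 2 :=
          mul_le_mul_of_nonneg_left (pow_le_pow_left₀ hμ0 hμ2 2) (sq_nonneg s)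
        have h7 : t ^ 2 = s ^ 2 * L ^ 2 := by rw [← hsL]; ring
        have h8 : L ^ 2 = ε ^ 2 + (b + ε) ^ 2 := by
          rw [hL_def]; exact Real.sq_sqrt (by positivity)
        rw [h7, h8]; nlinarith
      calc Real.sqrt _ ≤ Real.sqrt (t ^ 2) := Real.sqrt_le_sqrt hkey
      _ = t := Real.sqrt_sq ht0
    · -- decrease
      show μ - s * (μ - a - ε) ≤ μ - σ * t
      rw [← hsL]
      nlinarith
    · -- equivariance
      show H (-w) s = -(H w s)
      exact hsym

/-- **Theorem 3.8 (second part).** Equivariant criterion ensuring `|d_{ℤ₂}G_f|(0,η) = 1` for an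
even lower semicontinuous function `f` on a Banach space at `(0,η) ∈ epi f` with `f 0 < η`. -/
theorem statement5 {X : Type*} [NormedAddCommGroup X] [NormedSpace ℝ X] [CompleteSpace X]
    (f : X → EReal) (hlsc : LowerSemicontinuous f) (hbot : ∀ x, f x ≠ ⊥)
    (heven : ∀ x, f (-x) = f x)
    (η : ℝ) (hmem : ((0 : X), η) ∈ epiSet f) (hlt : f 0 < (η : EReal))
    (hyp : ∀ ϱ : ℝ, 0 < ϱ → ∃ δ : ℝ, 0 < δ ∧ ∃ H : X → ℝ → X,
      ContinuousOn (fun q : X × ℝ => H q.1 q.2)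
        ({w | w ∈ ball (0 : X) δ ∧ f w < ((η + δ : ℝ) : EReal)} ×ˢ Icc 0 δ) ∧
      ∀ w, w ∈ ball (0 : X) δ → f w < ((η + δ : ℝ) : EReal) → ∀ t ∈ Icc (0:ℝ) δ,
        dist (H w t) w ≤ ϱ * t ∧
        f (H w t) ≤ ((1 - t : ℝ) : EReal) * f w + ((t : ℝ) : EReal) * (f 0 + (ϱ : EReal)) ∧
        H (-w) t = -(H w t)) :
    slopeZ2 f η = 1 := by
  have hsub : ∀ σ ∈ slopeZ2Set f η, σ ≤ 1 := by
    rintro σ ⟨hσ0, δ, hδ, H, -, hH⟩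
    have hp : ((0:X), η) ∈ ballE ((0:X), η) δ ∩ epiSet f := by
      refine ⟨?_, hmem⟩
      show distE ((0:X), η) ((0:X), η) < δ
      simpa [distE] using hδ
    obtain ⟨-, hd, hdec, -⟩ := hH _ hp δ ⟨hδ.le, le_refl δ⟩
    have h1 : η - (H ((0:X), η) δ).2 ≤ distE (H ((0:X), η) δ) ((0:X), η) := by
      have := snd_le_distE (H ((0:X), η) δ) ((0:X), η)
      have := neg_abs_le ((H ((0:X), η) δ).2 - η)
      linarith
    have : σ * δ ≤ δ := by
      simp only at hdec
      linarith
    nlinarith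
  have hmem' : ∀ σ : ℝ, 0 ≤ σ → σ < 1 → σ ∈ slopeZ2Set f η :=
    mem_slopeZ2Set f hbot η hmem hlt hyp
  have h0 : (0:ℝ) ∈ slopeZ2Set f η := hmem' 0 le_rfl one_pos
  have hbdd : BddAbove (slopeZ2Set f η) := ⟨1, hsub⟩
  have hle : slopeZ2 f η ≤ 1 := csSup_le ⟨0, h0⟩ hsub
  have hge : 1 ≤ slopeZ2 f η := by
    by_contra hc
    push_neg at hc
    have h0s : 0 ≤ slopeZ2 f η := le_csSup hbdd h0
    set σ := (slopeZ2 f η + 1) / 2 with hσ_def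
    have hσ0 : 0 ≤ σ := by positivity
    have hσ1 : σ < 1 := by rw [hσ_def]; linarith
    have : σ ≤ slopeZ2 f η := le_csSup hbdd (hmem' σ hσ0 hσ1)
    rw [hσ_def] at this; linarith
  linarith
end
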